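/- arXiv:0804.1028 — 2 statements merged into one kernel-verified Lean document; each statement's English description precedes it below -/
import Mathlib

section
/- For every n ≥ 1, all roots of the Narayana polynomial N_n(x) are simple (i.e., N_n(x) is squarefree over the reals), and every root lies in the interval (-∞, 0]. -/
/-!
Coefficientwise, the ratio of consecutive Narayana numbers shows that `y = N_n` solves the
hypergeometric equation `x (x - 1) y'' - 2 n x y' + n (n + 1) y = 0`. Writing
`y = (x - r) ^ m s` with `s(r) ≠ 0` and `m ≥ 2`, the lowest-order term of the equation at `r`
is `r (r - 1) m (m - 1) s(r)`, so a multiple root can only sit at `0` or `1`. But `N_n` has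
positive coefficients with linear coefficient `1`, so `0` is a simple root and `N_n` has no root
in `(0, ∞)`; in particular `1` is not a root. Since all complex roots are simple, `N_n` is
separable, hence squarefree.
-/

open Polynomial

/-- The n-th Narayana polynomial N_n(x) = Σ_{k=1}^n (1/n)·C(n,k-1)·C(n,k)·x^k. -/
noncomputable def narayanaPoly (n : ℕ) : Polynomial ℝ :=
  ∑ k ∈ Finset.Icc 1 n, C ((n.choose (k - 1) * n.choose k : ℝ) / n) * X ^ k

open Finset

namespace Nat

theorem cast_add_one_mul_choose_succ {R : Type*} [CommRing R] (n k : ℕ) :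
    ((k : R) + 1) * n.choose (k + 1) = ((n : R) - k) * n.choose k := by
  rcases le_or_gt k n with hk | hk
  · have h := congrArg (Nat.cast (R := R)) (choose_succ_right_eq n k)
    push_cast [hk] at h
    linear_combination h
  · rw [choose_eq_zero_of_lt hk, choose_eq_zero_of_lt (by omega)]
    simp

end Nat

namespace Polynomial

theorem derivative_X_sub_C_pow_succ_mul {R : Type*} [CommRing R] (r : R) (k : ℕ) (s : R[X]) :
    derivative ((X - C r) ^ (k + 1) * s) =
      (X - C r) ^ k * (C ((k : R) + 1) * s + (X - C r) * derivative s) := by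
  simp only [derivative_mul, derivative_X_sub_C_pow, C_add, C_1, map_natCast]
  push_cast
  ring

theorem rootMultiplicity_le_one_of_ode {R : Type*} [CommRing R] [IsDomain R] [CharZero R]
    {a b c p : R[X]} {r : R}
    (hode : a * derivative (derivative p) + b * derivative p + c * p = 0) (hp : p ≠ 0)
    (ha : a.eval r ≠ 0) : p.rootMultiplicity r ≤ 1 := by
  by_contra! hlt
  obtain ⟨t, ht⟩ : ∃ t, p.rootMultiplicity r = t + 2 := ⟨_, (Nat.sub_add_cancel hlt).symm⟩
  set s := p /ₘ (X - C r) ^ p.rootMultiplicity r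
  have hs : s.eval r ≠ 0 := eval_divByMonic_pow_rootMultiplicity_ne_zero r hp
  have hps : p = (X - C r) ^ (t + 1 + 1) * s := by
    rw [← ht]
    exact (pow_mul_divByMonic_rootMultiplicity_eq p r).symm
  set B := C (((t + 1 : ℕ) : R) + 1) * s + (X - C r) * derivative s
  set A := C ((t : R) + 1) * B + (X - C r) * derivative B
  have hp' : derivative p = (X - C r) ^ (t + 1) * B := by
    rw [hps, derivative_X_sub_C_pow_succ_mul]
  have hp'' : derivative (derivative p) = (X - C r) ^ t * A := by
    rw [hp', derivative_X_sub_C_pow_succ_mul]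
  have hfactor : (X - C r) ^ t * (a * A + (X - C r) * (b * B + (X - C r) * c * s)) = 0 := by
    rw [← hode, hp'', hp', hps]
    ring
  have hA : a * A + (X - C r) * (b * B + (X - C r) * c * s) = 0 :=
    (mul_eq_zero.1 hfactor).resolve_left (pow_ne_zero _ (X_sub_C_ne_zero r))
  have heval := congrArg (eval r) hA
  simp only [A, B, eval_add, eval_mul, eval_sub, eval_X, eval_C, sub_self, zero_mul,
    add_zero, eval_zero] at heval
  exact mul_ne_zero ha (mul_ne_zero (Nat.cast_add_one_ne_zero t)
    (mul_ne_zero (Nat.cast_add_one_ne_zero (t + 1)) hs)) heval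

theorem separable_of_rootMultiplicity_map_le_one {K L : Type*} [Field K] [Field L]
    [IsAlgClosed L] [Algebra K L] {p : K[X]} (hp : p ≠ 0)
    (h : ∀ r : L, (p.map (algebraMap K L)).rootMultiplicity r ≤ 1) : p.Separable := by
  classical
  rw [← nodup_aroots_iff_of_splits hp (IsAlgClosed.splits (p.map (algebraMap K L))),
    Multiset.nodup_iff_count_le_one]
  intro r
  rw [count_roots]
  exact h r

end Polynomial

theorem coeff_narayanaPoly_zero (n : ℕ) : (narayanaPoly n).coeff 0 = 0 := by
  simp [narayanaPoly, finsetSum_coeff]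

theorem coeff_narayanaPoly_succ (n k : ℕ) :
    (narayanaPoly n).coeff (k + 1) = n.choose k * n.choose (k + 1) / n := by
  simp only [narayanaPoly, finsetSum_coeff, coeff_C_mul_X_pow, sum_ite_eq, mem_Icc]
  split_ifs with hk
  · simp
  · rw [Nat.choose_eq_zero_of_lt (by omega : n < k + 1)]
    simp

theorem coeff_narayanaPoly_one {n : ℕ} (hn : n ≠ 0) : (narayanaPoly n).coeff 1 = 1 := by
  simp [coeff_narayanaPoly_succ n 0, hn]

theorem narayanaPoly_ne_zero {n : ℕ} (hn : n ≠ 0) : narayanaPoly n ≠ 0 := fun h => by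
  simpa [h] using coeff_narayanaPoly_one hn

theorem coeff_narayanaPoly_recurrence (n k : ℕ) :
    ((k : ℝ) + 1) * ((k : ℝ) + 2) * (narayanaPoly n).coeff (k + 2) =
      ((n : ℝ) - k - 1) * ((n : ℝ) - k) * (narayanaPoly n).coeff (k + 1) := by
  have h₁ := Nat.cast_add_one_mul_choose_succ (R := ℝ) n k
  have h₂ := Nat.cast_add_one_mul_choose_succ (R := ℝ) n (k + 1)
  push_cast at h₂
  rw [coeff_narayanaPoly_succ, coeff_narayanaPoly_succ, mul_div_assoc', mul_div_assoc']
  congr 1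
  linear_combination
    ((k : ℝ) + 1) * n.choose (k + 1) * h₂ + ((n : ℝ) - k - 1) * n.choose (k + 1) * h₁

theorem narayanaPoly_ode (n : ℕ) :
    X * (X - 1) * derivative (derivative (narayanaPoly n))
      + C (-2 * n : ℝ) * X * derivative (narayanaPoly n)
      + C ((n : ℝ) * (n + 1)) * narayanaPoly n = 0 := by
  ext k
  rcases k with _ | _ | k
  · simp [coeff_narayanaPoly_zero]
  all_goals
    simp only [mul_sub, sub_mul, mul_one, mul_assoc, coeff_add, coeff_sub, coeff_C_mul, coeff_X_mul,
      coeff_X_mul_zero, coeff_derivative, coeff_zero]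
    push_cast
  · linear_combination -coeff_narayanaPoly_recurrence n 0
  · have h := coeff_narayanaPoly_recurrence n (k + 1)
    push_cast at h
    linear_combination -h

theorem narayanaPoly_eval_pos {n : ℕ} (hn : n ≠ 0) {x : ℝ} (hx : 0 < x) :
    0 < (narayanaPoly n).eval x := by
  rw [narayanaPoly, eval_finsetSum]
  refine sum_pos (fun k hk => ?_) (nonempty_Icc.2 (Nat.one_le_iff_ne_zero.2 hn))
  have hkn := (mem_Icc.1 hk).2
  have := Nat.choose_pos (n := n) (k := k - 1) (by omega)
  have := Nat.choose_pos hkn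
  simp only [eval_mul, eval_C, eval_pow, eval_X]
  positivity

/-- N_n(x) is squarefree over ℝ and all its real roots are non-positive. -/
theorem narayana_squarefree_roots_nonpos (n : ℕ) (hn : 1 ≤ n) :
    Squarefree (narayanaPoly n) ∧
      ∀ x : ℝ, (narayanaPoly n).IsRoot x → x ≤ 0 := by
  have hn0 : n ≠ 0 := Nat.one_le_iff_ne_zero.1 hn
  refine ⟨(separable_of_rootMultiplicity_map_le_one (narayanaPoly_ne_zero hn0)
      fun (r : ℂ) => ?_).squarefree,
    fun x hx => not_lt.1 fun hpos => (narayanaPoly_eval_pos hn0 hpos).ne' hx⟩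
  set Q := (narayanaPoly n).map (algebraMap ℝ ℂ)
  have hQ : Q ≠ 0 := map_ne_zero (narayanaPoly_ne_zero hn0)
  have hode : X * (X - 1) * derivative (derivative Q) + C (-2 * n : ℂ) * X * derivative Q
      + C ((n : ℂ) * (n + 1)) * Q = 0 := by
    simpa [Q, derivative_map] using congrArg (map (algebraMap ℝ ℂ)) (narayanaPoly_ode n)
  by_cases hr : (X * (X - 1) : ℂ[X]).eval r = 0
  · rw [← not_lt, one_lt_rootMultiplicity_iff_isRoot hQ]
    obtain rfl | hr1 : r = 0 ∨ r - 1 = 0 := by simpa using hr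
    · rintro ⟨-, h⟩
      rw [IsRoot.def, derivative_map, eval_zero_map, ← coeff_zero_eq_eval_zero, coeff_derivative,
        coeff_narayanaPoly_one hn0] at h
      norm_num at h
    · rintro ⟨h, -⟩
      rw [sub_eq_zero.1 hr1, IsRoot.def, eval_one_map] at h
      exact (narayanaPoly_eval_pos hn0 one_pos).ne' (by simpa using h)
  · exact rootMultiplicity_le_one_of_ode hode hQ hr
end

section
/- For every n ≥ 3, the roots of N_{n-1}(x)/x strictly interlace the roots of N_n(x)/x: if ξ_1 < ξ_2 < ... < ξ_{n-2} are the roots of N_{n-1}(x)/x and η_1 < η_2 < ... < η_{n-1} those of N_n(x)/x, then η_1 < ξ_1 < η_2 < ξ_2 < ... < ξ_{n-2} < η_{n-1}. -/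
/-!
Write `N_n = X * R_n`. Comparing coefficients (with Pascal's rule and
`(k+1) C(M+1,k+1) = (M+1) C(M,k)`) gives `(n-1) (x-1) R_{n-1}(x) = 2x R_n'(x) - (n-1) R_n(x)`.
Since `R_n` has nonnegative coefficients and `R_n(0) = 1`, its `n-1` roots `η_i` are negative,
and being `n-1` distinct roots of a polynomial of degree at most `n-1` they are simple. At `η_i`
the identity says that `R_{n-1}(η_i)` has the sign of `R_n'(η_i)`, which alternates along
consecutive simple roots. So `R_{n-1}` has a root in each of the `n-2` gaps `(η_i, η_{i+1})`;
it has only `n-2` roots, and a strictly increasing self-map of `Fin (n-2)` is the identity,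
so `ξ_i` is the one in the `i`-th gap.
-/

open Polynomial

open Set

theorem exists_mem_Icc_eq_zero_of_mul_nonpos {α : Type*} [ConditionallyCompleteLinearOrder α]
    [TopologicalSpace α] [OrderTopology α] [DenselyOrdered α] {f : α → ℝ} {a b : α}
    (hab : a ≤ b) (hf : ContinuousOn f (Icc a b)) (h : f a * f b ≤ 0) :
    ∃ x ∈ Icc a b, f x = 0 := by
  rcases mul_nonpos_iff.1 h with ⟨ha, hb⟩ | ⟨ha, hb⟩
  · exact intermediate_value_Icc' hab hf ⟨hb, ha⟩
  · exact intermediate_value_Icc hab hf ⟨ha, hb⟩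

theorem eval_derivative_mul_eval_derivative_neg {p : ℝ[X]} {a b : ℝ} (hab : a < b)
    (ha : p.IsRoot a) (hb : p.IsRoot b) (hgap : ∀ x ∈ Ioo a b, ¬p.IsRoot x)
    (ha' : (derivative p).eval a ≠ 0) (hb' : (derivative p).eval b ≠ 0) :
    (derivative p).eval a * (derivative p).eval b < 0 := by
  obtain ⟨r, rfl⟩ := dvd_iff_isRoot.2 ha
  have hr : r.IsRoot b := by
    simpa [sub_ne_zero.2 hab.ne'] using hb
  obtain ⟨q, rfl⟩ := dvd_iff_isRoot.2 hr
  have hpa : (derivative ((X - C a) * ((X - C b) * q))).eval a = (a - b) * q.eval a := by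
    simp [derivative_mul]
  have hpb : (derivative ((X - C a) * ((X - C b) * q))).eval b = (b - a) * q.eval b := by
    simp [derivative_mul]
  have hq : ∀ x ∈ Icc a b, q.eval x ≠ 0 := by
    rintro x ⟨hax, hxb⟩ hx
    rcases hax.eq_or_lt with rfl | hax
    · exact ha' (by rw [hpa, hx, mul_zero])
    rcases hxb.eq_or_lt with rfl | hxb
    · exact hb' (by rw [hpb, hx, mul_zero])
    exact hgap x ⟨hax, hxb⟩ (by simp [IsRoot, hx])
  have hsign : 0 < q.eval a * q.eval b := by
    by_contra! h
    obtain ⟨x, hx, hx0⟩ := exists_mem_Icc_eq_zero_of_mul_nonpos hab.le q.continuousOn h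
    exact hq x hx hx0
  rw [hpa, hpb]
  nlinarith [mul_pos hsign (mul_pos (sub_pos.2 hab) (sub_pos.2 hab))]

theorem eval_derivative_ne_zero_of_natDegree_le_card {R : Type*} [CommRing R] [IsDomain R]
    {p : R[X]} (hp : p ≠ 0) {T : Finset R} (hT : ∀ a ∈ T, p.IsRoot a)
    (hcard : p.natDegree ≤ T.card) {a : R} (ha : a ∈ T) :
    (derivative p).eval a ≠ 0 := by
  classical
  have hsub : T ⊆ p.roots.toFinset := fun b hb => by simpa [hp] using hT b hb
  have hnodup : p.roots.Nodup := by
    rw [← Multiset.toFinset_card_eq_card_iff_nodup]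
    exact le_antisymm (Multiset.toFinset_card_le _)
      (p.card_roots'.trans (hcard.trans (Finset.card_le_card hsub)))
  have hmult : p.rootMultiplicity a ≤ 1 := by
    rw [← count_roots]
    exact Multiset.nodup_iff_count_le_one.1 hnodup a
  intro h
  exact hmult.not_gt ((one_lt_rootMultiplicity_iff_isRoot hp).2 ⟨hT a ha, h⟩)

theorem exists_isRoot_mem_Ioo_of_eval_mul_eval_derivative_pos {P Q : ℝ[X]} {a b : ℝ}
    (hab : a < b) (ha : P.IsRoot a) (hb : P.IsRoot b) (hgap : ∀ x ∈ Ioo a b, ¬P.IsRoot x)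
    (hsa : 0 < Q.eval a * (derivative P).eval a) (hsb : 0 < Q.eval b * (derivative P).eval b) :
    ∃ x ∈ Ioo a b, Q.IsRoot x := by
  have hP' := eval_derivative_mul_eval_derivative_neg hab ha hb hgap
    (right_ne_zero_of_mul hsa.ne') (right_ne_zero_of_mul hsb.ne')
  have hQ : Q.eval a * Q.eval b < 0 := by
    have := mul_pos hsa hsb
    nlinarith
  obtain ⟨x, ⟨hax, hxb⟩, hx⟩ :=
    exists_mem_Icc_eq_zero_of_mul_nonpos hab.le Q.continuousOn hQ.le
  refine ⟨x, ⟨hax.lt_of_ne ?_, hxb.lt_of_ne ?_⟩, hx⟩ <;> rintro rfl <;> simp [hx] at hQ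

theorem interlace_of_eval_mul_eval_derivative_pos {P Q : ℝ[X]} {k : ℕ} {ξ η : ℕ → ℝ}
    (hξ_mono : StrictMonoOn ξ (Iio k)) (hη_mono : StrictMonoOn η (Iio (k + 1)))
    (hQ : {x | Q.IsRoot x} ⊆ ξ '' Iio k) (hP : {x | P.IsRoot x} = η '' Iio (k + 1))
    (hsign : ∀ i < k + 1, 0 < Q.eval (η i) * (derivative P).eval (η i)) :
    ∀ i < k, η i < ξ i ∧ ξ i < η (i + 1) := by
  have hroot : ∀ i < k + 1, P.IsRoot (η i) := fun i hi =>
    hP.symm.subset (mem_image_of_mem η hi)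
  have hgap (i : Fin k) : ∃ j : Fin k, η i < ξ j ∧ ξ j < η (i + 1) := by
    have hi : (i : ℕ) < k + 1 := by omega
    have hi' : (i : ℕ) + 1 < k + 1 := by omega
    have hno : ∀ x ∈ Ioo (η i) (η (i + 1)), ¬P.IsRoot x := by
      rintro x ⟨h₁, h₂⟩ hx
      obtain ⟨j, hj, rfl⟩ := hP.subset hx
      rcases le_or_gt (j : ℕ) i with hji | hij
      · exact (hη_mono.monotoneOn hj hi hji).not_gt h₁
      · exact (hη_mono.monotoneOn hi' hj hij).not_gt h₂
    obtain ⟨x, hx, hQx⟩ := exists_isRoot_mem_Ioo_of_eval_mul_eval_derivative_pos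
      (hη_mono hi hi' (Nat.lt_succ_self i)) (hroot i hi) (hroot (i + 1) hi') hno
      (hsign i hi) (hsign (i + 1) hi')
    obtain ⟨j, hj, rfl⟩ := hQ hQx
    exact ⟨⟨j, hj⟩, hx⟩
  choose σ hσ using hgap
  have hσ_mono : StrictMono σ := fun i j hij => by
    have hle : η (i + 1) ≤ η j :=
      hη_mono.monotoneOn (mem_Iio.2 (by omega)) (mem_Iio.2 (by omega)) hij
    exact (hξ_mono.lt_iff_lt (σ i).2 (σ j).2).1 (((hσ i).2.trans_le hle).trans (hσ j).1)
  intro i hi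
  simpa [hσ_mono.apply_eq] using hσ ⟨i, hi⟩

noncomputable def narayanaPolyDivX (n : ℕ) : ℝ[X] :=
  ∑ k ∈ Finset.range n, C ((n.choose k * n.choose (k + 1) : ℝ) / n) * X ^ k

theorem narayanaPoly_eq_X_mul (n : ℕ) : narayanaPoly n = X * narayanaPolyDivX n := by
  rw [narayanaPoly, narayanaPolyDivX, Finset.mul_sum, ← Finset.Ico_add_one_right_eq_Icc,
    Finset.sum_Ico_eq_sum_range, Nat.add_sub_cancel]
  refine Finset.sum_congr rfl fun k _ => ?_
  rw [add_comm 1 k, Nat.add_sub_cancel, pow_succ]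
  ring

theorem coeff_narayanaPolyDivX (n k : ℕ) :
    (narayanaPolyDivX n).coeff k = n.choose k * n.choose (k + 1) / n := by
  simp only [narayanaPolyDivX, finsetSum_coeff, coeff_C_mul_X_pow, Finset.sum_ite_eq,
    Finset.mem_range, ite_eq_left_iff, not_lt]
  intro hk
  rw [Nat.choose_eq_zero_of_lt (by omega : n < k + 1)]
  simp

theorem natDegree_narayanaPolyDivX_le (n : ℕ) : (narayanaPolyDivX n).natDegree ≤ n - 1 := by
  refine natDegree_le_iff_coeff_eq_zero.2 fun k hk => ?_
  rw [coeff_narayanaPolyDivX, Nat.choose_eq_zero_of_lt (by omega : n < k + 1)]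
  simp

theorem eval_narayanaPolyDivX_pos {n : ℕ} (hn : n ≠ 0) {x : ℝ} (hx : 0 ≤ x) :
    0 < (narayanaPolyDivX n).eval x := by
  rw [narayanaPolyDivX, eval_finsetSum]
  refine Finset.sum_pos' (fun k _ => by simp only [eval_mul, eval_C, eval_pow, eval_X]; positivity)
    ⟨0, Finset.mem_range.2 (Nat.pos_of_ne_zero hn), ?_⟩
  have : (n : ℝ) ≠ 0 := Nat.cast_ne_zero.2 hn
  simp [this]

theorem narayanaPolyDivX_ne_zero {n : ℕ} (hn : n ≠ 0) : narayanaPolyDivX n ≠ 0 := fun h =>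
  (eval_narayanaPolyDivX_pos hn le_rfl).ne' (by rw [h, eval_zero])

theorem setOf_narayanaPoly_eval_eq_zero {n : ℕ} (hn : n ≠ 0) :
    {x : ℝ | x ≠ 0 ∧ (narayanaPoly n).eval x = 0} = {x | (narayanaPolyDivX n).IsRoot x} := by
  ext x
  simp only [mem_ofPred_eq, narayanaPoly_eq_X_mul, eval_mul, eval_X, mul_eq_zero, IsRoot.def]
  constructor
  · rintro ⟨hx, hx0 | h⟩
    exacts [absurd hx0 hx, h]
  · intro h
    refine ⟨?_, Or.inr h⟩
    rintro rfl
    exact (eval_narayanaPolyDivX_pos hn le_rfl).ne' h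

theorem narayana_coeff_recurrence (M m : ℕ) :
    ((M : ℝ) + 1) * (M.choose m * M.choose (m + 1) - M.choose (m + 1) * M.choose (m + 2))
      = (2 * (m + 1) - M) * ((M + 1).choose (m + 1) * (M + 1).choose (m + 2)) := by
  have pascal_mul (k : ℕ) :
      ((M : ℝ) + 1) * M.choose k = (M.choose k + M.choose (k + 1)) * (k + 1) := by
    have := Nat.add_one_mul_choose_eq M k
    rw [Nat.choose_succ_succ'] at this
    exact_mod_cast this
  have h1 := pascal_mul m
  have h2 := pascal_mul (m + 1)
  push_cast at h2
  rw [Nat.choose_succ_succ', Nat.choose_succ_succ' M (m + 1)]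
  push_cast
  linear_combination (M.choose (m + 1) + M.choose (m + 2) : ℝ) * h1
    + (M.choose m + M.choose (m + 1) : ℝ) * h2

theorem narayanaPolyDivX_derivative_identity (M : ℕ) :
    C (M : ℝ) * (X - 1) * narayanaPolyDivX M
      = 2 * X * derivative (narayanaPolyDivX (M + 1)) - C (M : ℝ) * narayanaPolyDivX (M + 1) := by
  rcases eq_or_ne M 0 with rfl | hM
  · simp [narayanaPolyDivX]
  have hM' : (M : ℝ) ≠ 0 := Nat.cast_ne_zero.2 hM
  ext (_ | m)
  · simp [coeff_narayanaPolyDivX, mul_sub, sub_mul, hM', Nat.cast_add_one_ne_zero]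
  · simp [coeff_narayanaPolyDivX, mul_sub, sub_mul, mul_assoc, coeff_derivative]
    rw [mul_div_cancel₀ _ hM', mul_div_cancel₀ _ hM']
    field_simp
    linear_combination narayana_coeff_recurrence M m

theorem eval_narayanaPolyDivX_mul_derivative_pos {n : ℕ} (hn : n ≠ 0) {x : ℝ} (hx : x < 0)
    (hroot : (narayanaPolyDivX (n + 1)).IsRoot x)
    (hsimple : (derivative (narayanaPolyDivX (n + 1))).eval x ≠ 0) :
    0 < (narayanaPolyDivX n).eval x * (derivative (narayanaPolyDivX (n + 1))).eval x := by
  set d := (derivative (narayanaPolyDivX (n + 1))).eval x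
  have h := congrArg (eval x) (narayanaPolyDivX_derivative_identity n)
  simp only [eval_mul, eval_sub, eval_C, eval_X, eval_one, eval_ofNat, hroot.eq_zero, mul_zero,
    sub_zero] at h
  have hcoef : (n : ℝ) * (x - 1) < 0 := mul_neg_of_pos_of_neg (by positivity) (by linarith)
  refine pos_of_mul_neg_right ?_ hcoef.le
  calc (n : ℝ) * (x - 1) * ((narayanaPolyDivX n).eval x * d) = 2 * x * (d * d) := by
        rw [← mul_assoc, h, mul_assoc]
    _ < 0 := mul_neg_of_neg_of_pos (by linarith) (mul_self_pos.2 hsimple)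

theorem narayana_interlacing_general (n : ℕ) (ξ η : ℕ → ℝ)
    (hξmono : ∀ i j, i < j → j < n - 2 → ξ i < ξ j)
    (hηmono : ∀ i j, i < j → j < n - 1 → η i < η j)
    (hξ : {x : ℝ | x ≠ 0 ∧ (narayanaPoly (n - 1)).eval x = 0} = ξ '' {i | i < n - 2})
    (hη : {x : ℝ | x ≠ 0 ∧ (narayanaPoly n).eval x = 0} = η '' {i | i < n - 1}) :
    ∀ i, i < n - 2 → η i < ξ i ∧ ξ i < η (i + 1) := by
  intro i hi
  obtain ⟨m, rfl⟩ : ∃ m, n = m + 2 := ⟨n - 2, by omega⟩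
  simp only [show m + 2 - 1 = m + 1 from rfl, Nat.add_sub_cancel] at hξmono hηmono hξ hη hi
  rw [setOf_narayanaPoly_eval_eq_zero (by omega)] at hξ hη
  set P := narayanaPolyDivX (m + 2)
  have hη_mono : StrictMonoOn η (Iio (m + 1)) := fun a _ b hb hab => hηmono a b hab hb
  have hroot : ∀ j < m + 1, P.IsRoot (η j) := fun j hj =>
    hη.symm.subset (mem_image_of_mem η hj)
  have hneg : ∀ j < m + 1, η j < 0 := fun j hj =>
    not_le.1 fun h => (eval_narayanaPolyDivX_pos (by omega) h).ne' (hroot j hj)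
  have hsimple : ∀ j < m + 1, (derivative P).eval (η j) ≠ 0 := by
    intro j hj
    refine eval_derivative_ne_zero_of_natDegree_le_card (narayanaPolyDivX_ne_zero (by omega))
      (T := (Finset.range (m + 1)).image η) (by simpa using fun k hk => hroot k hk) ?_
      (Finset.mem_image_of_mem η (Finset.mem_range.2 hj))
    rw [Finset.card_image_of_injOn (by simpa using hη_mono.injOn), Finset.card_range]
    exact natDegree_narayanaPolyDivX_le (m + 2)
  exact interlace_of_eval_mul_eval_derivative_pos (fun a _ b hb hab => hξmono a b hab hb) hη_mono
    hξ.subset hη (fun j hj =>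
      eval_narayanaPolyDivX_mul_derivative_pos (by omega) (hneg j hj) (hroot j hj) (hsimple j hj))
    i hi

/-- The roots of N_{n-1}(x)/x strictly interlace those of N_n(x)/x: if ξ_0 < … < ξ_{n-3}
are the nonzero roots of N_{n-1} and η_0 < … < η_{n-2} the nonzero roots of N_n, then
η_i < ξ_i < η_{i+1} for each i. -/
theorem narayana_interlacing (n : ℕ) (hn : 3 ≤ n) (ξ η : ℕ → ℝ)
    (hξmono : ∀ i j, i < j → j < n - 2 → ξ i < ξ j)
    (hηmono : ∀ i j, i < j → j < n - 1 → η i < η j)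
    (hξ : {x : ℝ | x ≠ 0 ∧ (narayanaPoly (n - 1)).eval x = 0} = ξ '' {i | i < n - 2})
    (hη : {x : ℝ | x ≠ 0 ∧ (narayanaPoly n).eval x = 0} = η '' {i | i < n - 1}) :
    ∀ i, i < n - 2 → η i < ξ i ∧ ξ i < η (i + 1) :=
  narayana_interlacing_general n ξ η hξmono hηmono hξ hη
end
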